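/- arXiv:2407.02169 — 4 statements merged into one kernel-verified Lean document; each statement's English description precedes it below -/
import Mathlib

section
/- Let n ≥ 1 and let E be the graph of the quantum sphere S^{2n+1}_q. Then the map Φ : E^∞_ℓ → ℕ̄ⁿ_↗, where Φ(x)_i ∈ ℕ̄ is the number (possibly +∞) of indices j ≥ 1 with x_j ∈ {ℓ_1,…,ℓ_i}, is well defined (its values lie in ℕ̄ⁿ_↗) and is a homeomorphism. -/
/-! Basic definitions: directed graphs, infinite path space, shift, finite paths,
shift equivalence, the graph groupoid and its topology (Kumjian-Pask-Raeburn-Renault). -/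

variable {V E : Type*}

/-- The space `E^∞` of right-infinite paths of the graph with edge set `E`, source map `s`
and target map `t`, as a subset of the product `ℕ → E` (sequences of composable edges). -/
def PathSp (s t : E → V) : Set (ℕ → E) := {x | ∀ i : ℕ, t (x i) = s (x (i + 1))}

/-- The one-sided shift on the infinite path space. -/
def shiftP (s t : E → V) (x : PathSp s t) : PathSp s t :=
  ⟨fun i => x.1 (i + 1), fun i => x.2 (i + 1)⟩

/-- Shift equivalence with lag `k`. -/
def SEquiv {X : Type*} (σ : X → X) (k : ℤ) (x y : X) : Prop :=
  ∃ j : ℕ, 0 ≤ (j : ℤ) + k ∧ σ^[j] x = σ^[((j : ℤ) + k).toNat] y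

/-- A finite path in the graph: a composable (possibly empty) list of edges together with a
source vertex (so that vertices are the paths of length `0`). -/
structure FinPath (s t : E → V) where
  src : V
  edges : List E
  chain : edges.Chain' (fun e f => t e = s f)
  srcOk : ∀ e ∈ edges.head?, s e = src

/-- The target of a finite path (its source, if the path has length 0). -/
def FinPath.tgt {s t : E → V} (α : FinPath s t) : V :=
  α.edges.getLast?.elim α.src t

/-- Concatenation of a finite list of edges with an infinite sequence of edges. -/
def catSeq (l : List E) (z : ℕ → E) : ℕ → E :=
  fun i => if h : i < l.length then l.get ⟨i, h⟩ else z (i - l.length)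

/-- The basic set `Z(α,β) = {(αz, |β|-|α|, βz) : z ∈ E^∞, s(z) = t(α) = t(β)}` of the
graph groupoid. -/
def ZSet (s t : E → V) (α β : FinPath s t) :
    Set (↥(PathSp s t) × ℤ × ↥(PathSp s t)) :=
  {q | ∃ z : ↥(PathSp s t), s (z.1 0) = α.tgt ∧ s (z.1 0) = β.tgt ∧
    q.1.1 = catSeq α.edges z.1 ∧
    q.2.1 = (β.edges.length : ℤ) - (α.edges.length : ℤ) ∧
    q.2.2.1 = catSeq β.edges z.1}

/-- The morphism space `𝒢¹ = {(x,k,y) : x ∼ₖ y}` of the graph groupoid. -/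
def G1 (s t : E → V) : Type _ :=
  {q : ↥(PathSp s t) × ℤ × ↥(PathSp s t) // SEquiv (shiftP s t) q.2.1 q.1 q.2.2}

/-- The topology of the graph groupoid: generated by the sets `Z(α,β)` with
`t(α) = t(β)`. -/
def G1Top (s t : E → V) : TopologicalSpace (G1 s t) :=
  TopologicalSpace.generateFrom
    {U | ∃ α β : FinPath s t, α.tgt = β.tgt ∧ U = Subtype.val ⁻¹' ZSet s t α β}

/-! The graph of the quantum sphere `S^{2n+1}_q` (Hong–Szymański, appendix version):
vertices `1, …, n+1` (here `Fin (n+1)`), a loop `ℓᵢ` at every vertex `i` (here `Sum.inl i`)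
and an edge `rᵢ : i → i+1` for `1 ≤ i ≤ n` (here `Sum.inr i` for `i : Fin n`). -/

/-- The edge set of the graph of `S^{2n+1}_q`. -/
abbrev SphE (n : ℕ) := Fin (n + 1) ⊕ Fin n

/-- Source map of the graph of `S^{2n+1}_q`. -/
def sphS (n : ℕ) : SphE n → Fin (n + 1)
  | .inl i => i
  | .inr i => i.castSucc

/-- Target map of the graph of `S^{2n+1}_q`. -/
def sphT (n : ℕ) : SphE n → Fin (n + 1)
  | .inl i => i
  | .inr i => i.succ

/-- The subset `E^∞_ℓ ⊆ E^∞` of infinite paths whose first edge is a loop. -/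
def ELoop (n : ℕ) : Set ↥(PathSp (sphS n) (sphT n)) :=
  {x | ∃ i : Fin (n + 1), x.1 0 = Sum.inl i}

/-- The map `Φ : E^∞ → ℕ̄ⁿ`: `Φ(x)ᵢ` is the number (possibly `+∞`) of indices `j` such that
`x_j` is one of the loops `ℓ₁, …, ℓᵢ` (vertices are `0`-indexed here, so the paper's loop
`ℓ_m`, `1 ≤ m ≤ i`, is `Sum.inl v` with `v + 1 ≤ i`, i.e. `(v : ℕ) ≤ (i : ℕ)` for
`i : Fin n` standing for the paper's index `i+1`). -/
noncomputable def PhiMap (n : ℕ) (x : ↥(PathSp (sphS n) (sphT n))) : Fin n → ℕ∞ :=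
  fun i => {j : ℕ | ∃ v : Fin (n + 1), x.1 j = Sum.inl v ∧ (v : ℕ) ≤ (i : ℕ)}.encard

/-!
A path `x` is determined by its vertex sequence `v j = s(x j)`, which stays put along a loop and
moves up by one along an edge `rᵢ`. Counting flat steps by telescoping gives
`v j ≤ i ↔ j + v 0 < Φ(x)ᵢ + i + 1`, and, as the first edge is a loop, `Φ(x)ᵢ = 0 ↔ i < v 0`.
Hence `Φ(x)` determines `v 0`, then `v`, then `x`; reading the same relations backwards turns any
increasing `k` into a path with `Φ = k`. Each edge of that path depends on finitely many of the
clopen conditions `kᵢ ≤ m`, so the inverse of `Φ` is continuous, and a continuous bijection from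
the compact space `ℕ̄ⁿ_↗` onto the Hausdorff space `E^∞_ℓ` is a homeomorphism.
-/

open Finset Filter Topology

section LatticePath

variable {v : ℕ → ℕ}

def flatStepsLE (v : ℕ → ℕ) (i : ℕ) : Set ℕ := {m | v (m + 1) = v m ∧ v m ≤ i}

theorem encard_flatStepsLE_eq_zero_iff (hmono : Monotone v) (h01 : v 1 = v 0) (i : ℕ) :
    (flatStepsLE v i).encard = 0 ↔ i < v 0 := by
  rw [Set.encard_eq_zero, Set.eq_empty_iff_forall_notMem]
  refine ⟨fun h => not_le.1 fun hle => h 0 ⟨h01, hle⟩, fun h m hm => ?_⟩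
  have := hmono (Nat.zero_le m)
  exact absurd hm.2 (by omega)

variable (hv : ∀ j, v (j + 1) = v j ∨ v (j + 1) = v j + 1)
include hv

theorem monotone_of_step : Monotone v :=
  monotone_nat_of_le_succ fun j => by rcases hv j with h | h <;> omega

theorem card_flatSteps_add (N : ℕ) : #{m ∈ range N | v (m + 1) = v m} + v N = N + v 0 := by
  induction N with
  | zero => simp
  | succ N ih =>
    rw [range_add_one, filter_insert]
    rcases hv N with h | h
    · rw [if_pos h, card_insert_of_notMem (by simp)]
      omega
    · rw [if_neg (by omega)]
      omega

theorem infinite_flatSteps_of_le (i : ℕ) (hi : ∀ j, v j ≤ i) :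
    {m | v (m + 1) = v m}.Infinite := by
  intro hfin
  have hsub : {m ∈ range (hfin.toFinset.card + i + 1) | v (m + 1) = v m} ⊆ hfin.toFinset :=
    fun m hm => by simpa using (mem_filter.1 hm).2
  have := card_le_card hsub
  have := card_flatSteps_add hv (hfin.toFinset.card + i + 1)
  have := hi (hfin.toFinset.card + i + 1)
  omega

/-- Telescoping: before the first time `T` at which `v` exceeds `i` there are `T + v 0 - (i + 1)`
flat steps, and if `v` never exceeds `i` there are infinitely many. -/
theorem le_iff_lt_encard_flatStepsLE (i j : ℕ) :
    v j ≤ i ↔ ((j + v 0 : ℕ) : ℕ∞) < (flatStepsLE v i).encard + (i + 1 : ℕ) := by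
  by_cases hb : ∃ T, i < v T
  · classical
    obtain ⟨T, hT⟩ : ∃ T, ∀ m, v m ≤ i ↔ m < T := ⟨Nat.find hb, fun m =>
      ⟨fun h => by_contra fun hm => (Nat.find_spec hb).not_ge
        ((monotone_of_step hv (not_lt.1 hm)).trans h),
        fun h => not_lt.1 (Nat.find_min hb h)⟩⟩
    have hset : flatStepsLE v i = ↑{m ∈ range T | v (m + 1) = v m} := by
      ext m
      simp only [flatStepsLE, hT, coe_filter, mem_range, Set.mem_ofPred_eq]
      tauto
    have hcount := card_flatSteps_add hv T
    rw [hset, Set.encard_coe_eq_coe_finsetCard, hT, ← Nat.cast_add, Nat.cast_lt]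
    rcases Nat.eq_zero_or_pos T with rfl | hpos
    · have := hT 0
      simp only [range_zero, filter_empty, card_empty] at hcount ⊢
      omega
    · have hbefore := (hT (T - 1)).2 (by omega)
      have hafter := (hT T).not.2 (lt_irrefl T)
      have hstep := hv (T - 1)
      rw [Nat.sub_add_cancel hpos] at hstep
      omega
  · simp only [not_exists, not_lt] at hb
    have hset : flatStepsLE v i = {m | v (m + 1) = v m} := by
      ext m
      simp [flatStepsLE, hb m]
    simp [hset, (infinite_flatSteps_of_le hv i hb).encard_eq, hb j]

end LatticePath

theorem ENat.eq_of_forall_natCast_add_lt_iff {a b : ℕ∞} {z : ℕ} (ha : (z : ℕ∞) < a)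
    (hb : (z : ℕ∞) < b) (h : ∀ j : ℕ, ((j + z : ℕ) : ℕ∞) < a ↔ ((j + z : ℕ) : ℕ∞) < b) :
    a = b := by
  refine eq_of_forall_lt_iff fun c => ?_
  induction c using ENat.recTopCoe with
  | top => simp
  | coe m =>
    rcases le_or_gt z m with hzm | hmz
    · simpa [Nat.sub_add_cancel hzm] using h (m - z)
    · exact iff_of_true ((Nat.cast_lt.2 hmz).trans ha) ((Nat.cast_lt.2 hmz).trans hb)

theorem ENat.eventually_le_natCast_iff (a : ℕ∞) (m : ℕ) :
    ∀ᶠ b in 𝓝 a, (b ≤ (m : ℕ∞) ↔ a ≤ m) := by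
  induction a using ENat.recTopCoe with
  | top =>
    filter_upwards [Ioi_mem_nhds (ENat.natCast_lt_top m)] with b hb
    simp [not_le.2 (show (m : ℕ∞) < b from hb)]
  | coe a => simp

variable {n : ℕ}

def vertexSeq (x : ↥(PathSp (sphS n) (sphT n))) (j : ℕ) : ℕ := sphS n (x.1 j)

theorem vertexSeq_le (x : ↥(PathSp (sphS n) (sphT n))) (j : ℕ) : vertexSeq x j ≤ n :=
  (sphS n _).is_le

theorem vertexSeq_succ (x : ↥(PathSp (sphS n) (sphT n))) (j : ℕ) :
    vertexSeq x (j + 1) = vertexSeq x j ∨ vertexSeq x (j + 1) = vertexSeq x j + 1 := by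
  rw [vertexSeq, vertexSeq, ← x.2 j]
  rcases x.1 j with v | a <;> simp [sphS, sphT]

theorem vertexSeq_one_eq_zero {x : ↥(PathSp (sphS n) (sphT n))} (hx : x ∈ ELoop n) :
    vertexSeq x 1 = vertexSeq x 0 := by
  obtain ⟨v, hv⟩ := hx
  rw [vertexSeq, vertexSeq, ← x.2 0, hv, sphS, sphT]

theorem phiMap_eq_encard (x : ↥(PathSp (sphS n) (sphT n))) (i : Fin n) :
    PhiMap n x i = (flatStepsLE (vertexSeq x) i).encard := by
  unfold PhiMap
  congr 1
  ext m
  simp only [flatStepsLE, vertexSeq, ← x.2 m, Set.mem_ofPred_eq]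
  rcases x.1 m with v | a <;> simp [sphS, sphT]

theorem phiMap_monotone (x : ↥(PathSp (sphS n) (sphT n))) : Monotone (PhiMap n x) := by
  intro i i' hii
  apply Set.encard_mono
  rintro j ⟨v, hv, hvi⟩
  exact ⟨v, hv, le_trans hvi (by exact_mod_cast hii)⟩

def edgeTo (u w : Fin (n + 1)) : SphE n :=
  if h : u < w then .inr ⟨u, by omega⟩ else .inl u

theorem sphS_edgeTo (u w : Fin (n + 1)) : sphS n (edgeTo u w) = u := by
  unfold edgeTo
  split_ifs <;> rfl

theorem sphT_edgeTo {u w : Fin (n + 1)} (h : (w : ℕ) = u ∨ (w : ℕ) = u + 1) :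
    sphT n (edgeTo u w) = w := by
  unfold edgeTo
  split_ifs with huw <;> ext <;> simp [sphT] <;> omega

theorem edgeTo_self (u : Fin (n + 1)) : edgeTo u u = .inl u := dif_neg (lt_irrefl u)

theorem edgeTo_sphS (x : ↥(PathSp (sphS n) (sphT n))) (j : ℕ) :
    edgeTo (sphS n (x.1 j)) (sphS n (x.1 (j + 1))) = x.1 j := by
  rw [← x.2 j]
  rcases x.1 j with v | a
  · exact edgeTo_self v
  · exact dif_pos (by simp [sphS, sphT, Fin.lt_def])

def zeroCount (k : Fin n → ℕ∞) : ℕ := #{i | k i = 0}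

/-- The vertex sequence that `le_iff_lt_encard_flatStepsLE` forces on a path with loop counts `k`
(`zeroCount k` is then its starting vertex). -/
def vertexOf (k : Fin n → ℕ∞) (j : ℕ) : Fin (n + 1) :=
  ⟨#{i : Fin n | k i + (i + 1 : ℕ) ≤ (j + zeroCount k : ℕ)},
    Nat.lt_succ_of_le ((card_filter_le _ _).trans (card_fin n).le)⟩

def pathOf (k : Fin n → ℕ∞) (j : ℕ) : SphE n := edgeTo (vertexOf k j) (vertexOf k (j + 1))

section Monotone

variable {k : Fin n → ℕ∞} (hk : Monotone k)
include hk

theorem eq_zero_iff_lt_zeroCount (i : Fin n) : k i = 0 ↔ (i : ℕ) < zeroCount k :=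
  (Fin.lt_card_filter_univ_iff_apply_of_imp _
    fun _ _ hba ha => nonpos_iff_eq_zero.1 (ha ▸ hk hba)).symm

theorem vertexOf_le_iff (i : Fin n) (j : ℕ) :
    (vertexOf k j : ℕ) ≤ i ↔ ((j + zeroCount k : ℕ) : ℕ∞) < k i + (i + 1 : ℕ) := by
  refine not_lt.symm.trans ((Fin.lt_card_filter_univ_iff_apply_of_imp
    (fun i : Fin n => k i + (i + 1 : ℕ) ≤ (j + zeroCount k : ℕ)) fun a b hba ha =>
    (add_le_add (hk hba) (Nat.cast_le.2 (Nat.succ_le_succ hba))).trans ha).not.trans not_le)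

theorem vertexOf_eq_zeroCount {j : ℕ} (hj : j ≤ 1) : (vertexOf k j : ℕ) = zeroCount k := by
  have hfilter : ∀ i : Fin n,
      k i + (i + 1 : ℕ) ≤ (j + zeroCount k : ℕ) ↔ (i : ℕ) < zeroCount k := by
    intro i
    rw [← eq_zero_iff_lt_zeroCount hk]
    by_cases h0 : k i = 0
    · have := (eq_zero_iff_lt_zeroCount hk i).1 h0
      simp only [h0, zero_add, Nat.cast_le, iff_true]
      omega
    · have hz := (eq_zero_iff_lt_zeroCount hk i).not.1 h0
      have : ((i + 1 + 1 : ℕ) : ℕ∞) ≤ k i + (i + 1 : ℕ) :=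
        calc ((i + 1 + 1 : ℕ) : ℕ∞) = 1 + ((i + 1 : ℕ) : ℕ∞) := by push_cast; ring
          _ ≤ k i + (i + 1 : ℕ) := by gcongr; exact Order.one_le_iff_ne_zero.2 h0
      simp only [h0, iff_false, not_le]
      exact lt_of_lt_of_le (Nat.cast_lt.2 (by omega)) this
  have hle : zeroCount k ≤ n := (card_filter_le _ _).trans (card_fin n).le
  simp only [vertexOf, hfilter, Fin.card_filter_val_lt, min_eq_right hle]

theorem vertexOf_succ (j : ℕ) : (vertexOf k (j + 1) : ℕ) = vertexOf k j ∨
    (vertexOf k (j + 1) : ℕ) = vertexOf k j + 1 := by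
  have hmono : (vertexOf k j : ℕ) ≤ vertexOf k (j + 1) := by
    simp only [vertexOf]
    exact card_le_card fun i hi => by
      simp only [mem_filter, mem_univ, true_and] at hi ⊢
      exact hi.trans (Nat.cast_le.2 (by omega))
  have hstep : (vertexOf k (j + 1) : ℕ) ≤ vertexOf k j + 1 := by
    set a := (vertexOf k j : ℕ)
    by_cases han : a + 1 < n
    · refine (vertexOf_le_iff hk ⟨a + 1, han⟩ _).2 ?_
      have hlt := (vertexOf_le_iff hk ⟨a, by omega⟩ j).1 le_rfl
      calc ((j + 1 + zeroCount k : ℕ) : ℕ∞) = ((j + zeroCount k : ℕ) : ℕ∞) + 1 := by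
            push_cast; ring
        _ < k ⟨a, _⟩ + (a + 1 : ℕ) + 1 := WithTop.add_lt_add_right ENat.one_ne_top hlt
        _ = k ⟨a, _⟩ + (a + 1 + 1 : ℕ) := by push_cast; ring
        _ ≤ k ⟨a + 1, han⟩ + (a + 1 + 1 : ℕ) := by
            gcongr
            exact hk (Fin.mk_le_mk.2 (Nat.le_succ a))
    · exact (vertexOf k (j + 1)).is_le.trans (by omega)
  omega

theorem pathOf_mem : pathOf k ∈ PathSp (sphS n) (sphT n) := fun j => by
  simp only [pathOf, sphT_edgeTo (vertexOf_succ hk j), sphS_edgeTo]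

theorem pathOf_zero : pathOf k 0 = .inl (vertexOf k 0) := by
  have h01 : vertexOf k 1 = vertexOf k 0 :=
    Fin.ext (by rw [vertexOf_eq_zeroCount hk le_rfl, vertexOf_eq_zeroCount hk zero_le_one])
  rw [pathOf, zero_add, h01, edgeTo_self]

theorem vertexSeq_pathOf (j : ℕ) :
    vertexSeq ⟨pathOf k, pathOf_mem hk⟩ j = vertexOf k j := by
  simp only [vertexSeq, pathOf, sphS_edgeTo]

theorem phiMap_pathOf : PhiMap n ⟨pathOf k, pathOf_mem hk⟩ = k := by
  funext i
  set x : ↥(PathSp (sphS n) (sphT n)) := ⟨pathOf k, pathOf_mem hk⟩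
  have hv := vertexSeq_succ x
  have hx0 : vertexSeq x 0 = zeroCount k := by
    rw [vertexSeq_pathOf hk, vertexOf_eq_zeroCount hk zero_le_one]
  have h01 : vertexSeq x 1 = vertexSeq x 0 := by
    rw [vertexSeq_pathOf hk, vertexSeq_pathOf hk, vertexOf_eq_zeroCount hk le_rfl,
      vertexOf_eq_zeroCount hk zero_le_one]
  rw [phiMap_eq_encard]
  rcases lt_or_ge (i : ℕ) (zeroCount k) with hi | hi
  · rw [(eq_zero_iff_lt_zeroCount hk i).2 hi,
      encard_flatStepsLE_eq_zero_iff (monotone_of_step hv) h01, hx0]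
    exact hi
  · have hbound : ∀ a : ℕ∞, ((zeroCount k : ℕ) : ℕ∞) < a + (i + 1 : ℕ) := fun a =>
      (Nat.cast_lt.2 (by omega)).trans_le le_add_self
    have hiff : ∀ j : ℕ,
        ((j + zeroCount k : ℕ) : ℕ∞) < (flatStepsLE (vertexSeq x) i).encard + (i + 1 : ℕ) ↔
          ((j + zeroCount k : ℕ) : ℕ∞) < k i + (i + 1 : ℕ) := fun j => by
      rw [← hx0, ← le_iff_lt_encard_flatStepsLE hv, hx0, ← vertexOf_le_iff hk,
        vertexSeq_pathOf hk]
    exact WithTop.add_right_cancel (ENat.natCast_ne_top _)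
      (ENat.eq_of_forall_natCast_add_lt_iff (hbound _) (hbound _) hiff)

end Monotone

theorem pathOf_phiMap {x : ↥(PathSp (sphS n) (sphT n))} (hx : x ∈ ELoop n) :
    pathOf (PhiMap n x) = x.1 := by
  have hv := vertexSeq_succ x
  have hcount : ∀ m, m ≤ n → #{i : Fin n | (i : ℕ) < m} = m := fun m hm => by
    rw [Fin.card_filter_val_lt, min_eq_right hm]
  have hz : zeroCount (PhiMap n x) = vertexSeq x 0 := by
    simp only [zeroCount, phiMap_eq_encard,
      encard_flatStepsLE_eq_zero_iff (monotone_of_step hv) (vertexSeq_one_eq_zero hx)]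
    exact hcount _ (vertexSeq_le x 0)
  have hvert : ∀ j, vertexOf (PhiMap n x) j = sphS n (x.1 j) := fun j => by
    have hp : ∀ i : Fin n,
        PhiMap n x i + (i + 1 : ℕ) ≤ (j + vertexSeq x 0 : ℕ) ↔ (i : ℕ) < vertexSeq x j :=
        fun i => by
      rw [← not_lt, phiMap_eq_encard, ← le_iff_lt_encard_flatStepsLE hv, not_le]
    ext
    simp only [vertexOf, hz, hp]
    exact hcount _ (vertexSeq_le x j)
  funext j
  rw [pathOf, hvert, hvert, edgeTo_sphS]

theorem eventually_zeroCount_eq (k : Fin n → ℕ∞) :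
    ∀ᶠ k' in 𝓝 k, zeroCount k' = zeroCount k := by
  have : ∀ i, ∀ᶠ k' in 𝓝 k, (k' i = 0 ↔ k i = 0) := fun i =>
    ((continuous_apply i).continuousAt.eventually (ENat.eventually_le_natCast_iff (k i) 0)).mono
      fun k' h => by simpa using h
  filter_upwards [eventually_all.2 this] with k' hk'
  simp only [zeroCount, hk']

theorem continuous_vertexOf (j : ℕ) : Continuous fun k : Fin n → ℕ∞ => vertexOf k j := by
  refine IsLocallyConstant.continuous ((IsLocallyConstant.iff_eventually_eq _).2 fun k => ?_)
  have : ∀ i : Fin n, ∀ᶠ k' in 𝓝 k,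
      (k' i + ((i + 1 : ℕ) : ℕ∞) ≤ ((j + zeroCount k : ℕ) : ℕ∞) ↔
        k i + (i + 1 : ℕ) ≤ (j + zeroCount k : ℕ)) := fun i =>
    ((by fun_prop : Continuous fun k' : Fin n → ℕ∞ => k' i + ((i + 1 : ℕ) : ℕ∞)).tendsto
      k).eventually (ENat.eventually_le_natCast_iff _ _)
  filter_upwards [eventually_zeroCount_eq k, eventually_all.2 this] with k' hz hk'
  ext
  simp only [vertexOf, hz, hk']

theorem continuous_pathOf_apply (j : ℕ) : Continuous fun k : Fin n → ℕ∞ => pathOf k j :=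
  (continuous_of_discreteTopology
    (f := fun p : Fin (n + 1) × Fin (n + 1) => edgeTo p.1 p.2)).comp
      ((continuous_vertexOf j).prodMk (continuous_vertexOf (j + 1)))

noncomputable def loopPathEquiv (n : ℕ) : {k : Fin n → ℕ∞ // Monotone k} ≃ ELoop n where
  toFun k := ⟨⟨pathOf k.1, pathOf_mem k.2⟩, _, pathOf_zero k.2⟩
  invFun x := ⟨PhiMap n x.1, phiMap_monotone x.1⟩
  left_inv k := Subtype.ext (phiMap_pathOf k.2)
  right_inv x := Subtype.ext (Subtype.ext (pathOf_phiMap x.2))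

instance : CompactSpace {k : Fin n → ℕ∞ // Monotone k} :=
  isCompact_iff_compactSpace.1 isClosed_monotone.isCompact

theorem continuous_loopPathEquiv : Continuous (loopPathEquiv n) :=
  (((continuous_pi continuous_pathOf_apply).comp continuous_subtype_val).subtype_mk _).subtype_mk _

theorem stmt_8_general (n : ℕ) :
    (∀ x : ↥(ELoop n), Monotone (PhiMap n x.1)) ∧
    ∃ h : ↥(ELoop n) ≃ₜ {k : Fin n → ℕ∞ // Monotone k},
      ∀ x : ↥(ELoop n), (h x).1 = PhiMap n x.1 :=
  ⟨fun x => phiMap_monotone x.1, continuous_loopPathEquiv.homeoOfEquivCompactToT2.symm,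
    fun _ => rfl⟩

/-- For the graph of `S^{2n+1}_q` (`n ≥ 1`), the loop-counting map
`Φ : E^∞_ℓ → ℕ̄ⁿ_↗` is well defined (takes values in the increasing tuples) and is a
homeomorphism onto `ℕ̄ⁿ_↗ = {k : k₁ ≤ … ≤ k_n}`. -/
theorem stmt_8 (n : ℕ) (hn : 1 ≤ n) :
    (∀ x : ↥(ELoop n), Monotone (PhiMap n x.1)) ∧
    ∃ h : ↥(ELoop n) ≃ₜ {k : Fin n → ℕ∞ // Monotone k},
      ∀ x : ↥(ELoop n), (h x).1 = PhiMap n x.1 :=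
  stmt_8_general n
end

section
/- Let n ≥ 1 and let F : ℕ̄ⁿ → ℕ̄ⁿ_↗ be the partial-sums map F(m) = (m_1, m_1+m_2, …, m_1+⋯+m_n) (sums in ℕ̄, with +∞ absorbing). Then for all m, m' ∈ ℕ̄ⁿ one has F(m) = F(m') if and only if (m, m') ∈ R_∞, i.e. if and only if ε(m) = ε(m') and m_i = m'_i for all i < ε(m). -/
/-! Tuples in `ℕ̄ⁿ = (ℕ∞)ⁿ` (here `Fin n → ℕ∞`), their anchor and index (`0`-based: the
paper's `ε(m)` resp. `ι(m)`, with values in `{1, …, n+1}`, equals `anchor n m + 1` resp.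
`indexv n m + 1`), partial sums, and the equivalence relation `R_∞`. -/

/-- The (`0`-based) *anchor* of `m ∈ ℕ̄ⁿ`: the least `i` with `m i = ⊤`, and `n` if there is
no such `i` (the convention `m_{n+1} := +∞` of the paper). -/
noncomputable def anchor (n : ℕ) (m : Fin n → ℕ∞) : ℕ :=
  sInf {i : ℕ | n ≤ i ∨ ∃ h : i < n, m ⟨i, h⟩ = ⊤}

/-- The (`0`-based) *index* of `m ∈ ℕ̄ⁿ`: the least `i` with `m i ≠ 0`, and `n` if there is
no such `i` (the convention `m_{n+1} := +∞` of the paper). -/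
noncomputable def indexv (n : ℕ) (m : Fin n → ℕ∞) : ℕ :=
  sInf {i : ℕ | n ≤ i ∨ ∃ h : i < n, m ⟨i, h⟩ ≠ 0}

/-- The partial-sums map `ℕ̄ⁿ → ℕ̄ⁿ`, `m ↦ (m₁, m₁+m₂, …, m₁+⋯+m_n)` (`+∞` absorbing). -/
def psumE {n : ℕ} (m : Fin n → ℕ∞) : Fin n → ℕ∞ :=
  fun i => ∑ j ∈ Finset.Iic i, m j

/-- The partial-sums map `ℤⁿ → ℤⁿ`, `k ↦ (k₁, k₁+k₂, …, k₁+⋯+k_n)`. -/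
def psumZ {n : ℕ} (k : Fin n → ℤ) : Fin n → ℤ :=
  fun i => ∑ j ∈ Finset.Iic i, k j

/-- The equivalence relation `R_∞` on `ℕ̄ⁿ`: `(m, m') ∈ R_∞` iff `ε(m) = ε(m')` and
`mᵢ = m'ᵢ` for all `i < ε(m)`. -/
def Rinf (n : ℕ) (m m' : Fin n → ℕ∞) : Prop :=
  anchor n m = anchor n m' ∧ ∀ i : Fin n, (i : ℕ) < anchor n m → m i = m' i

/-- The sum `k + m ∈ ℕ̄` of `k : ℤ` and `m : ℕ̄` (with `k + ∞ = ∞`; for finite `m` the value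
is clamped to `0` when `m + k < 0`, which is immaterial under the condition `m + k ≥ 0`). -/
def addZE (k : ℤ) (m : ℕ∞) : ℕ∞ :=
  if m = ⊤ then ⊤ else ((((m.toNat : ℤ) + k).toNat : ℕ) : ℕ∞)

/-- The componentwise sum `k + m ∈ ℕ̄ⁿ` of `k : ℤⁿ` and `m : ℕ̄ⁿ`. -/
def addZv {n : ℕ} (k : Fin n → ℤ) (m : Fin n → ℕ∞) : Fin n → ℕ∞ :=
  fun i => addZE (k i) (m i)

/-- The condition `k + m ∈ ℕ̄ⁿ`: every component of the sum is `+∞` or a nonnegative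
integer. -/
def okAdd {n : ℕ} (k : Fin n → ℤ) (m : Fin n → ℕ∞) : Prop :=
  ∀ i : Fin n, m i = ⊤ ∨ 0 ≤ ((m i).toNat : ℤ) + k i

/-! The partial sum `F(m)ᵢ` is `+∞` exactly when `i ≥ ε(m)`, so `F(m)` determines the anchor,
and beyond it `F` sees nothing of `m`. Below the anchor all partial sums are finite, so the entries
`mᵢ` are recovered one after another by cancelling the finite sum `m₁ + ⋯ + m_{i-1}`. -/

open Finset

section PartialSums

variable {n : ℕ} {m m' : Fin n → ℕ∞}

lemma anchor_le (n : ℕ) (m : Fin n → ℕ∞) : anchor n m ≤ n :=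
  Nat.sInf_le (Or.inl le_rfl)

lemma apply_anchor_eq_top (h : anchor n m < n) : m ⟨anchor n m, h⟩ = ⊤ := by
  obtain h' | ⟨_, e⟩ := Nat.sInf_mem (s := {i : ℕ | n ≤ i ∨ ∃ h : i < n, m ⟨i, h⟩ = ⊤})
    ⟨n, Or.inl le_rfl⟩
  · exact absurd h (not_lt.2 h')
  · exact e

lemma ne_top_of_lt_anchor {i : Fin n} (h : (i : ℕ) < anchor n m) : m i ≠ ⊤ := fun e =>
  (Nat.sInf_le (s := {i : ℕ | n ≤ i ∨ ∃ h : i < n, m ⟨i, h⟩ = ⊤}) (Or.inr ⟨i.2, e⟩)).not_gt h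

lemma monotone_psumE (m : Fin n → ℕ∞) : Monotone (psumE m) := fun _ _ hij =>
  sum_le_sum_of_subset (Iic_subset_Iic.2 hij)

lemma psumE_eq_add_sum_Iio (m : Fin n → ℕ∞) (i : Fin n) :
    psumE m i = m i + ∑ j ∈ Iio i, m j := by
  rw [psumE, ← Iio_insert, sum_insert (by simp)]

lemma sum_Iio_ne_top_of_le_anchor {i : Fin n} (h : (i : ℕ) ≤ anchor n m) :
    ∑ j ∈ Iio i, m j ≠ ⊤ :=
  WithTop.sum_ne_top.2 fun _ hj => ne_top_of_lt_anchor ((Fin.lt_def.1 (mem_Iio.1 hj)).trans_le h)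

lemma psumE_eq_top_iff (m : Fin n → ℕ∞) (i : Fin n) : psumE m i = ⊤ ↔ anchor n m ≤ i := by
  constructor
  · intro h
    by_contra! hlt
    refine WithTop.sum_ne_top.2 (fun j hj => ne_top_of_lt_anchor ?_) h
    exact lt_of_le_of_lt (by exact_mod_cast mem_Iic.1 hj) hlt
  · intro h
    have hlt : anchor n m < n := h.trans_lt i.2
    have hmem : (⟨anchor n m, hlt⟩ : Fin n) ∈ Iic i := mem_Iic.2 (Fin.mk_le_of_le_val h)
    have := single_le_sum (f := m) (fun _ _ => zero_le) hmem
    rwa [apply_anchor_eq_top hlt, top_le_iff] at this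

lemma anchor_le_anchor_of_psumE_eq (h : psumE m = psumE m') : anchor n m' ≤ anchor n m := by
  rcases (anchor_le n m).lt_or_eq with hlt | heq
  · rw [← psumE_eq_top_iff m' ⟨anchor n m, hlt⟩, ← h, psumE_eq_top_iff]
  · exact (anchor_le n m').trans_eq heq.symm

lemma anchor_eq_anchor_of_psumE_eq (h : psumE m = psumE m') : anchor n m = anchor n m' :=
  (anchor_le_anchor_of_psumE_eq h.symm).antisymm (anchor_le_anchor_of_psumE_eq h)

lemma apply_eq_of_psumE_eq (h : psumE m = psumE m') (i : Fin n) (hi : (i : ℕ) < anchor n m) :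
    m i = m' i := by
  induction i using WellFoundedLT.induction with
  | _ i ih =>
  have hIio : ∑ j ∈ Iio i, m j = ∑ j ∈ Iio i, m' j :=
    sum_congr rfl fun j hj => ih j (mem_Iio.1 hj) ((Fin.lt_def.1 (mem_Iio.1 hj)).trans hi)
  have hsum := congrFun h i
  rw [psumE_eq_add_sum_Iio, psumE_eq_add_sum_Iio, ← hIio] at hsum
  exact WithTop.add_right_cancel (sum_Iio_ne_top_of_le_anchor hi.le) hsum

lemma psumE_eq_of_rinf (h : Rinf n m m') : psumE m = psumE m' := by
  obtain ⟨hanchor, heq⟩ := h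
  funext i
  by_cases hi : (i : ℕ) < anchor n m
  · exact sum_congr rfl fun j hj => heq j (lt_of_le_of_lt (by exact_mod_cast mem_Iic.1 hj) hi)
  · have hi := not_lt.1 hi
    rw [(psumE_eq_top_iff m i).2 hi, (psumE_eq_top_iff m' i).2 (hanchor ▸ hi)]

lemma psumE_eq_psumE_iff_rinf : psumE m = psumE m' ↔ Rinf n m m' :=
  ⟨fun h => ⟨anchor_eq_anchor_of_psumE_eq h, apply_eq_of_psumE_eq h⟩, psumE_eq_of_rinf⟩

end PartialSums

theorem stmt_9_general (n : ℕ) :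
    (∀ m : Fin n → ℕ∞, Monotone (psumE m)) ∧
    (∀ m m' : Fin n → ℕ∞, psumE m = psumE m' ↔ Rinf n m m') :=
  ⟨monotone_psumE, fun _ _ => psumE_eq_psumE_iff_rinf⟩

/-- For `n ≥ 1`, the partial-sums map `F : ℕ̄ⁿ → ℕ̄ⁿ_↗` takes values in the
increasing tuples, and `F(m) = F(m')` if and only if `(m, m') ∈ R_∞`, i.e. iff
`ε(m) = ε(m')` and `mᵢ = m'ᵢ` for all `i < ε(m)`. -/
theorem stmt_9 (n : ℕ) (hn : 1 ≤ n) :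
    (∀ m : Fin n → ℕ∞, Monotone (psumE m)) ∧
    (∀ m m' : Fin n → ℕ∞, psumE m = psumE m' ↔ Rinf n m m') :=
  stmt_9_general n
end

section
/- Let E be the graph with two vertices 1, 2, loops ℓ_1, ℓ_2 at each vertex and one edge r_1 from 1 to 2 (the graph of S³_q), and identify the morphism space 𝒢¹ of its graph groupoid with ℤ × R_tail, where R_tail = ℕ² ∪ {(+∞,+∞)} ⊆ ℕ̄², via the bijection (x,k,y) ↦ (k, Ψ(x), Ψ(y)) with Ψ(ℓ_2^∞) = 0, Ψ(ℓ_1^m r_1 ℓ_2^∞) = m+1, Ψ(ℓ_1^∞) = +∞. Then the transported graph-groupoid topology on ℤ × R_tail is generated by the singletons {(k,a,b)} with k ∈ ℤ and a,b ∈ ℕ, together with the sets Z_{k,m} := {(−k, j+k, j) : j ∈ ℕ̄, j ≥ m} for all k ∈ ℤ and m ∈ ℕ with m + k ≥ 0. -/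
/-! Basic definitions: directed graphs, infinite path space, shift, finite paths,
shift equivalence, the graph groupoid and its topology (Kumjian-Pask-Raeburn-Renault). -/

variable {V E : Type*}

/-- The tail-equivalence relation `R_tail = ℕ² ∪ {(+∞, +∞)} ⊆ ℕ̄²` for `S³_q`. -/
def RT : Set (ℕ∞ × ℕ∞) :=
  {q | (q.1 ≠ ⊤ ∧ q.2 ≠ ⊤) ∨ (q.1 = ⊤ ∧ q.2 = ⊤)}

/-- The set `Z_{k,m} = {(-k, j+k, j) : j ∈ ℕ̄, j ≥ m} ⊆ ℤ × ℕ̄ × ℕ̄`. -/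
def Zkm (k : ℤ) (m : ℕ) : Set (ℤ × ℕ∞ × ℕ∞) :=
  {p | ∃ j : ℕ∞, (m : ℕ∞) ≤ j ∧ p = (-k, addZE k j, j)}

/-!
Vertices `1` and `2` of the paper are `0` and `1 : Fin 2`.

Every infinite path of the graph is `ℓ₂^∞`, `ℓ₁^m r₁ ℓ₂^∞` or `ℓ₁^∞`, so the hypotheses make `Ψ`
the inverse of the enumeration `pathOf : ℕ̄ → E^∞` of these paths. Under `pathOf` the shift
becomes truncated subtraction, `σ^j (pathOf n) = pathOf (n - j)`, and prepending a finite path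
`α` to a path that starts at vertex `1` becomes `n ↦ |α| + n`. Hence a basic set `Z(α, β)` with
`t(α) = t(β) = 2` is a single morphism (only `ℓ₂^∞` leaves `2`), and with `t(α) = t(β) = 1` it
is `Z_{|α|-|β|, |β|+1}`. Conversely `Z_{k,m} = {(-k, m+k, m)} ∪ Z_{k,m+1}`, and a singleton
`{(k, a, b)}` is `Z(α, β)` for long enough initial segments `α`, `β` of the paths with
coordinates `a` and `b`.
-/

section PathSpace

variable {s t : E → V}

@[simp]
lemma iterate_shiftP_apply (x : PathSp s t) (j i : ℕ) :
    ((shiftP s t)^[j] x).1 i = x.1 (i + j) := by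
  induction j generalizing x with
  | zero => rfl
  | succ j ih => rw [Function.iterate_succ_apply, ih]; simp [shiftP, Nat.add_assoc]

lemma FinPath.tgt_eq_getLast (α : FinPath s t) (h : α.edges ≠ []) :
    α.tgt = t (α.edges.getLast h) := by
  simp [FinPath.tgt, List.getLast?_eq_some_getLast h]

lemma catSeq_add_length (l : List E) (z : ℕ → E) (i : ℕ) : catSeq l z (i + l.length) = z i := by
  simp [catSeq]

lemma catSeq_mem_pathSp (α : FinPath s t) {z : ℕ → E} (hz : z ∈ PathSp s t)
    (h : s (z 0) = α.tgt) : catSeq α.edges z ∈ PathSp s t := by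
  intro i
  rcases lt_trichotomy (i + 1) α.edges.length with hi | hi | hi
  · simp only [catSeq, hi, Nat.lt_of_succ_lt hi, dif_pos]
    exact List.isChain_iff_getElem.mp α.chain i hi
  · have hne : α.edges ≠ [] := List.ne_nil_of_length_pos (by omega)
    simp only [catSeq, show i < α.edges.length by omega, hi, lt_irrefl, dif_pos, dif_neg,
      not_false_eq_true, Nat.sub_self, h, FinPath.tgt_eq_getLast α hne,
      List.getLast_eq_getElem]
    simp [show i = α.edges.length - 1 by omega]
  · simpa [catSeq, show ¬ i < α.edges.length by omega, show ¬ i + 1 < α.edges.length by omega,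
      show i + 1 - α.edges.length = i - α.edges.length + 1 by omega] using hz (i - α.edges.length)

def FinPath.take (x : PathSp s t) (L : ℕ) : FinPath s t where
  src := s (x.1 0)
  edges := List.ofFn fun i : Fin L => x.1 i
  chain := List.isChain_ofFn.mpr fun i _ => x.2 i
  srcOk e he := by
    cases L with
    | zero => simp at he
    | succ L => simp [List.ofFn_succ] at he; rw [← he]

@[simp]
lemma FinPath.length_take (x : PathSp s t) (L : ℕ) : (FinPath.take x L).edges.length = L := by
  simp [FinPath.take]

lemma FinPath.tgt_take (x : PathSp s t) (L : ℕ) :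
    (FinPath.take x L).tgt = s (((shiftP s t)^[L] x).1 0) := by
  cases L with
  | zero => rfl
  | succ L =>
    rw [FinPath.tgt_eq_getLast _ (by simp [FinPath.take])]
    simp only [FinPath.take]
    rw [List.getLast_ofFn, iterate_shiftP_apply, Nat.zero_add]
    exact x.2 L

lemma catSeq_take (x : PathSp s t) (L : ℕ) :
    catSeq (FinPath.take x L).edges ((shiftP s t)^[L] x).1 = x.1 := by
  funext i
  by_cases hi : i < L
  · simp [catSeq, FinPath.take, hi]
  · simp [catSeq, hi, Nat.sub_add_cancel (not_lt.mp hi)]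

end PathSpace

namespace QuantumSphere3

open Topology

local notation "𝒫" => PathSp (sphS 1) (sphT 1)
local notation "σ" => shiftP (sphS 1) (sphT 1)
local notation "ℓ₁" => (Sum.inl 0 : SphE 1)
local notation "ℓ₂" => (Sum.inl 1 : SphE 1)
local notation "r₁" => (Sum.inr 0 : SphE 1)

lemma sphT_eq_zero_iff {e : SphE 1} : sphT 1 e = 0 ↔ e = ℓ₁ := by
  revert e; decide

lemma sphS_eq_one_iff {e : SphE 1} : sphS 1 e = 1 ↔ e = ℓ₂ := by
  revert e; decide

/-- The path `ℓ₁^(n-1) r₁ ℓ₂^∞` for `0 < n < ∞`, `ℓ₂^∞` for `n = 0` and `ℓ₁^∞` for `n = ∞`. -/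
def pathOf (n : ℕ∞) : 𝒫 :=
  ⟨fun i => if (i + 1 : ℕ∞) < n then ℓ₁ else if (i + 1 : ℕ∞) = n then r₁ else ℓ₂, by
    intro i
    induction n using ENat.recTopCoe with
    | top => simp; rfl
    | coe n =>
      norm_cast
      dsimp only
      split_ifs <;> first | rfl | omega⟩

@[simp]
lemma pathOf_top_apply (i : ℕ) : (pathOf ⊤).1 i = ℓ₁ := by
  simp [pathOf]

lemma pathOf_coe_apply (n i : ℕ) :
    (pathOf n).1 i = if i + 1 < n then ℓ₁ else if i + 1 = n then r₁ else ℓ₂ := by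
  simp only [pathOf]
  norm_cast

lemma pathOf_apply_eq_inl_one_iff (n : ℕ∞) (i : ℕ) : (pathOf n).1 i = ℓ₂ ↔ n ≤ i := by
  induction n using ENat.recTopCoe with
  | top => simp
  | coe n =>
    rw [pathOf_coe_apply, Nat.cast_le]
    split_ifs <;> simp <;> omega

lemma pathOf_injective : Function.Injective pathOf := by
  intro a b h
  have hab (i : ℕ) : a ≤ i ↔ b ≤ i := by
    rw [← pathOf_apply_eq_inl_one_iff, ← pathOf_apply_eq_inl_one_iff, h]
  induction a using ENat.recTopCoe with
  | top => induction b using ENat.recTopCoe with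
    | top => rfl
    | coe b => simpa using hab b
  | coe a => induction b using ENat.recTopCoe with
    | top => simpa using hab a
    | coe b =>
      have := (hab a).mp le_rfl
      have := (hab b).mpr le_rfl
      norm_cast at *
      omega

lemma iterate_shiftP_pathOf (j : ℕ) (n : ℕ∞) : σ^[j] (pathOf n) = pathOf (n - j) := by
  apply Subtype.ext
  funext i
  rw [iterate_shiftP_apply]
  induction n using ENat.recTopCoe with
  | top => simp
  | coe n =>
    rw [← ENat.natCast_sub, pathOf_coe_apply, pathOf_coe_apply]
    split_ifs <;> first | rfl | omega

lemma sphS_pathOf_apply_zero (n : ℕ∞) : sphS 1 ((pathOf n).1 0) = if n = 0 then 1 else 0 := by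
  induction n using ENat.recTopCoe with
  | top => simp; rfl
  | coe n =>
    rw [pathOf_coe_apply]
    split_ifs <;> first | rfl | simp_all <;> omega

lemma apply_succ_eq_inl_one (x : 𝒫) {i : ℕ} (h : x.1 i ≠ ℓ₁) : x.1 (i + 1) = ℓ₂ := by
  rw [← sphS_eq_one_iff, ← x.2 i]
  exact Fin.eq_one_of_ne_zero _ (mt sphT_eq_zero_iff.mp h)

lemma apply_eq_inl_one_of_lt (x : 𝒫) {i j : ℕ} (h : x.1 i ≠ ℓ₁) (hij : i < j) : x.1 j = ℓ₂ := by
  induction j, hij using Nat.le_induction with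
  | base => exact apply_succ_eq_inl_one x h
  | succ j _ ih => exact apply_succ_eq_inl_one x (by rw [ih]; decide)

/-- An edge other than `ℓ₁` ends at the vertex `2`, from which only `ℓ₂` leaves. -/
lemma pathOf_surjective : Function.Surjective pathOf := by
  classical
  intro x
  by_cases hx : ∀ i, x.1 i = ℓ₁
  · exact ⟨⊤, Subtype.ext (funext fun i => by simp [hx])⟩
  push Not at hx
  set p := Nat.find hx
  have before (i : ℕ) (hi : i < p) : x.1 i = ℓ₁ := not_not.mp (Nat.find_min hx hi)
  have after (i : ℕ) (hi : p < i) : x.1 i = ℓ₂ := apply_eq_inl_one_of_lt x (Nat.find_spec hx) hi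
  have hp : x.1 p = r₁ ∨ x.1 p = ℓ₂ := by
    have := Nat.find_spec hx
    revert this; generalize x.1 p = e; revert e; decide
  rcases hp with hp | hp
  · refine ⟨(p + 1 : ℕ), Subtype.ext (funext fun i => ?_)⟩
    rw [pathOf_coe_apply]
    split_ifs with h₁ h₂
    · exact (before i (by omega)).symm
    · rw [show i = p by omega, hp]
    · exact (after i (by omega)).symm
  · have hp0 : p = 0 := by
      by_contra hp0
      have := x.2 (p - 1)
      rw [before (p - 1) (by omega), Nat.sub_add_cancel (Nat.pos_of_ne_zero hp0), hp] at this
      exact absurd this (by decide)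
    refine ⟨(0 : ℕ), Subtype.ext (funext fun i => ?_)⟩
    rw [pathOf_coe_apply]
    rcases Nat.eq_zero_or_pos i with rfl | hi
    · rw [hp0] at hp
      simp [hp]
    · rw [after i (by omega)]; rfl

lemma sEquiv_pathOf_iff (k : ℤ) (a b : ℕ∞) :
    SEquiv σ k (pathOf a) (pathOf b) ↔ (a = ⊤ ↔ b = ⊤) := by
  simp only [SEquiv, iterate_shiftP_pathOf, pathOf_injective.eq_iff]
  constructor
  · rintro ⟨j, -, h⟩
    have sub_eq_top (c : ℕ∞) (i : ℕ) : c - i = ⊤ ↔ c = ⊤ := by simp [ENat.sub_eq_top_iff]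
    rw [← sub_eq_top a j, h, sub_eq_top]
  · intro h
    induction a using ENat.recTopCoe with
    | top =>
      obtain rfl : b = ⊤ := h.mp rfl
      exact ⟨k.natAbs, by omega, by simp⟩
    | coe a =>
      induction b using ENat.recTopCoe with
      | top => simp at h
      | coe b =>
        refine ⟨a + b + k.natAbs, by omega, ?_⟩
        rw [← ENat.natCast_sub, ← ENat.natCast_sub]
        congr 1
        omega

lemma catSeq_pathOf (α : FinPath (sphS 1) (sphT 1)) (n : ℕ∞)
    (h : sphS 1 ((pathOf n).1 0) = α.tgt) :
    ∃ p, catSeq α.edges (pathOf n).1 = (pathOf p).1 ∧ p - α.edges.length = n := by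
  obtain ⟨p, hp⟩ := pathOf_surjective ⟨_, catSeq_mem_pathSp α (pathOf n).2 h⟩
  refine ⟨p, congrArg Subtype.val hp.symm, pathOf_injective ?_⟩
  rw [← iterate_shiftP_pathOf, hp]
  ext i
  rw [iterate_shiftP_apply]
  exact catSeq_add_length _ _ i

lemma catSeq_pathOf_of_ne_zero (α : FinPath (sphS 1) (sphT 1)) {n : ℕ∞} (hn : n ≠ 0)
    (h : sphS 1 ((pathOf n).1 0) = α.tgt) :
    catSeq α.edges (pathOf n).1 = (pathOf (α.edges.length + n)).1 := by
  obtain ⟨p, hp, rfl⟩ := catSeq_pathOf α n h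
  rw [hp, add_tsub_cancel_of_le (tsub_pos_iff_lt.mp (pos_iff_ne_zero.mpr hn)).le]

lemma catSeq_pathOf_zero (α : FinPath (sphS 1) (sphT 1))
    (h : sphS 1 ((pathOf 0).1 0) = α.tgt) :
    ∃ a : ℕ, catSeq α.edges (pathOf 0).1 = (pathOf a).1 := by
  obtain ⟨p, hp, hp0⟩ := catSeq_pathOf α 0 h
  lift p to ℕ using ne_top_of_le_ne_top (ENat.natCast_ne_top _) (tsub_eq_zero_iff_le.mp hp0)
  exact ⟨p, hp⟩

lemma addZE_sub_add (p q : ℕ) (n : ℕ∞) : addZE ((p : ℤ) - q) (q + n) = p + n := by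
  induction n using ENat.recTopCoe with
  | top => simp [addZE]
  | coe n =>
    rw [← Nat.cast_add, addZE, if_neg (ENat.natCast_ne_top _), ENat.toNat_natCast,
      ← Nat.cast_add]
    congr 1
    omega

lemma Zkm_eq_insert (k : ℤ) (m : ℕ) :
    Zkm k m = insert (-k, ((((m : ℤ) + k).toNat : ℕ) : ℕ∞), (m : ℕ∞)) (Zkm k (m + 1)) := by
  ext p
  simp only [Zkm, Set.mem_insert_iff, Set.mem_ofPred_eq]
  constructor
  · rintro ⟨j, hj, rfl⟩
    rcases hj.eq_or_lt with rfl | hlt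
    · left
      simp [addZE]
    · exact Or.inr ⟨j, by simpa using Order.add_one_le_of_lt hlt, rfl⟩
  · rintro (rfl | ⟨j, hj, rfl⟩)
    · exact ⟨m, le_rfl, by simp [addZE]⟩
    · exact ⟨j, le_trans (by simp) hj, rfl⟩

def tailGenerators : Set (Set (ℤ × ℕ∞ × ℕ∞)) :=
  {U | ∃ (k : ℤ) (a b : ℕ), U = {(k, (a : ℕ∞), (b : ℕ∞))}} ∪
    {U | ∃ (k : ℤ) (m : ℕ), 0 ≤ (m : ℤ) + k ∧ U = Zkm k m}

variable {Ψ : 𝒫 → ℕ∞}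

lemma leftInverse_pathOf
    (hΨ2 : ∀ x : 𝒫, (∀ j : ℕ, x.1 j = ℓ₂) → Ψ x = 0)
    (hΨm : ∀ (m : ℕ) (x : 𝒫),
      (∀ j : ℕ, x.1 j = if j < m then ℓ₁ else if j = m then r₁ else ℓ₂) → Ψ x = (m : ℕ∞) + 1)
    (hΨ1 : ∀ x : 𝒫, (∀ j : ℕ, x.1 j = ℓ₁) → Ψ x = ⊤) :
    Function.LeftInverse Ψ pathOf := by
  intro n
  induction n using ENat.recTopCoe with
  | top => exact hΨ1 _ pathOf_top_apply
  | coe n =>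
    cases n with
    | zero => exact hΨ2 _ fun j => by simpa using pathOf_coe_apply 0 j
    | succ m => exact_mod_cast hΨm m _ fun j => by simpa using pathOf_coe_apply (m + 1) j

lemma eq_pathOf_iff (hΨ : Function.LeftInverse Ψ pathOf) {x : 𝒫} {n : ℕ∞} :
    x = pathOf n ↔ Ψ x = n := by
  constructor
  · rintro rfl
    exact hΨ n
  · rintro rfl
    obtain ⟨m, rfl⟩ := pathOf_surjective x
    rw [hΨ]

def coords (Ψ : 𝒫 → ℕ∞) (g : G1 (sphS 1) (sphT 1)) : ℤ × ℕ∞ × ℕ∞ :=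
  (g.1.2.1, Ψ g.1.1, Ψ g.1.2.2)

lemma coords_eq_iff (hΨ : Function.LeftInverse Ψ pathOf) (g : G1 (sphS 1) (sphT 1))
    (k : ℤ) (a b : ℕ∞) :
    coords Ψ g = (k, a, b) ↔ g.1.2.1 = k ∧ g.1.1 = pathOf a ∧ g.1.2.2 = pathOf b := by
  simp [coords, eq_pathOf_iff hΨ]

lemma coords_injective (hΨ : Function.LeftInverse Ψ pathOf) : Function.Injective (coords Ψ) := by
  have hΨinj : Function.Injective Ψ :=
    (hΨ.rightInverse_of_surjective pathOf_surjective).injective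
  intro g g' h
  simp only [coords, Prod.mk.injEq] at h
  exact Subtype.ext (Prod.ext (hΨinj h.2.1) (Prod.ext h.1 (hΨinj h.2.2)))

lemma range_coords (hΨ : Function.LeftInverse Ψ pathOf) :
    Set.range (coords Ψ) = {p | (p.2.1, p.2.2) ∈ RT} := by
  ext ⟨k, a, b⟩
  have hRT : (a, b) ∈ RT ↔ (a = ⊤ ↔ b = ⊤) := by simp only [RT, Set.mem_ofPred_eq]; tauto
  simp only [Set.mem_range, Set.mem_ofPred_eq, hRT, coords_eq_iff hΨ]
  constructor
  · rintro ⟨⟨⟨x, k, y⟩, hg⟩, rfl, rfl, rfl⟩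
    exact (sEquiv_pathOf_iff k a b).mp hg
  · intro h
    exact ⟨⟨(pathOf a, k, pathOf b), (sEquiv_pathOf_iff k a b).mpr h⟩, rfl, rfl, rfl⟩

lemma preimage_ZSet_of_tgt_one (hΨ : Function.LeftInverse Ψ pathOf)
    {α β : FinPath (sphS 1) (sphT 1)} (hα : α.tgt = 1) (hβ : β.tgt = 1) {a b : ℕ∞}
    (ha : catSeq α.edges (pathOf 0).1 = (pathOf a).1)
    (hb : catSeq β.edges (pathOf 0).1 = (pathOf b).1) :
    (Subtype.val ⁻¹' ZSet (sphS 1) (sphT 1) α β : Set (G1 (sphS 1) (sphT 1))) =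
      coords Ψ ⁻¹' {((β.edges.length : ℤ) - α.edges.length, a, b)} := by
  ext g
  simp only [Set.mem_preimage, Set.mem_singleton_iff, coords_eq_iff hΨ, ZSet]
  constructor
  · rintro ⟨z, hz, -, hx, hk, hy⟩
    obtain ⟨n, rfl⟩ := pathOf_surjective z
    obtain rfl : n = 0 := by
      by_contra hn
      simp [sphS_pathOf_apply_zero, hn, hα] at hz
    exact ⟨hk, Subtype.ext (hx.trans ha), Subtype.ext (hy.trans hb)⟩
  · rintro ⟨hk, hx, hy⟩
    refine ⟨pathOf 0, ?_, ?_, by rw [hx, ha], hk, by rw [hy, hb]⟩ <;>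
      simp [sphS_pathOf_apply_zero, hα, hβ]

lemma preimage_ZSet_of_tgt_zero (hΨ : Function.LeftInverse Ψ pathOf)
    {α β : FinPath (sphS 1) (sphT 1)} (hα : α.tgt = 0) (hβ : β.tgt = 0) :
    (Subtype.val ⁻¹' ZSet (sphS 1) (sphT 1) α β : Set (G1 (sphS 1) (sphT 1))) =
      coords Ψ ⁻¹' Zkm ((α.edges.length : ℤ) - β.edges.length) (β.edges.length + 1) := by
  ext ⟨⟨x, k, y⟩, hg⟩
  change (x, k, y) ∈ ZSet _ _ α β ↔ (k, Ψ x, Ψ y) ∈ Zkm _ _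
  obtain ⟨a, rfl⟩ := pathOf_surjective x
  obtain ⟨b, rfl⟩ := pathOf_surjective y
  have hz (n : ℕ∞) : sphS 1 ((pathOf n).1 0) = 0 ↔ n ≠ 0 := by
    simp [sphS_pathOf_apply_zero]
  have hcat {γ : FinPath (sphS 1) (sphT 1)} (hγ : γ.tgt = 0) {n : ℕ∞} (hn : n ≠ 0) :
      catSeq γ.edges (pathOf n).1 = (pathOf (γ.edges.length + n)).1 :=
    catSeq_pathOf_of_ne_zero γ hn (((hz n).mpr hn).trans hγ.symm)
  simp only [ZSet, Zkm, Set.mem_ofPred_eq, hΨ _, hα, hβ, Prod.mk.injEq]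
  constructor
  · rintro ⟨z, hz0, -, hx, hk, hy⟩
    obtain ⟨n, rfl⟩ := pathOf_surjective z
    have hn := (hz n).mp hz0
    rw [hcat hα hn] at hx
    rw [hcat hβ hn] at hy
    obtain rfl := pathOf_injective (Subtype.ext hx)
    obtain rfl := pathOf_injective (Subtype.ext hy)
    refine ⟨β.edges.length + n, ?_, by omega, (addZE_sub_add _ _ _).symm, rfl⟩
    push_cast
    exact add_le_add_right (Order.one_le_iff_ne_zero.mpr hn) _
  · rintro ⟨_, hb, rfl, rfl, rfl⟩
    obtain ⟨n, rfl⟩ : ∃ n, b = β.edges.length + n :=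
      ⟨b - β.edges.length, (add_tsub_cancel_of_le (le_trans (by simp) hb)).symm⟩
    have hn : n ≠ 0 := by
      rintro rfl
      norm_cast at hb
      omega
    refine ⟨pathOf n, (hz n).mpr hn, (hz n).mpr hn, ?_, by ring, (hcat hβ hn).symm⟩
    rw [addZE_sub_add, hcat hα hn]

lemma isOpen_preimage_coords_singleton (hΨ : Function.LeftInverse Ψ pathOf) (k : ℤ) (a b : ℕ) :
    IsOpen[G1Top (sphS 1) (sphT 1)] (coords Ψ ⁻¹' {(k, (a : ℕ∞), (b : ℕ∞))}) := by
  set L := a + b + k.natAbs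
  set L' := ((L : ℤ) + k).toNat
  have hpre {c M : ℕ} (hc : c ≤ M) :
      (FinPath.take (pathOf c) M).tgt = 1 ∧
        catSeq (FinPath.take (pathOf c) M).edges (pathOf 0).1 = (pathOf c).1 := by
    have h0 : σ^[M] (pathOf c) = pathOf 0 := by
      rw [iterate_shiftP_pathOf, ← ENat.natCast_sub, Nat.sub_eq_zero_of_le hc, Nat.cast_zero]
    rw [FinPath.tgt_take, ← h0, catSeq_take, h0, sphS_pathOf_apply_zero, if_pos rfl]
    exact ⟨rfl, rfl⟩
  obtain ⟨hα, ha⟩ := hpre (show a ≤ L by omega)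
  obtain ⟨hβ, hb⟩ := hpre (show b ≤ L' by omega)
  have hk : ((L' : ℤ) - L) = k := by omega
  rw [← hk, ← FinPath.length_take (pathOf a) L, ← FinPath.length_take (pathOf b) L',
    ← preimage_ZSet_of_tgt_one hΨ hα hβ ha hb]
  exact TopologicalSpace.isOpen_generateFrom_of_mem ⟨_, _, hα.trans hβ.symm, rfl⟩

lemma isOpen_preimage_coords_Zkm_succ (hΨ : Function.LeftInverse Ψ pathOf) (k : ℤ) (m : ℕ)
    (hkm : 0 ≤ (m : ℤ) + k) :
    IsOpen[G1Top (sphS 1) (sphT 1)] (coords Ψ ⁻¹' Zkm k (m + 1)) := by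
  have htgt (L : ℕ) : (FinPath.take (pathOf ⊤) L).tgt = 0 := by
    rw [FinPath.tgt_take, iterate_shiftP_pathOf, ENat.top_sub_natCast, pathOf_top_apply]
    rfl
  have hk : (((m : ℤ) + k).toNat : ℤ) - m = k := by omega
  rw [← hk, ← FinPath.length_take (pathOf ⊤) (((m : ℤ) + k).toNat),
    ← FinPath.length_take (pathOf ⊤) m, ← preimage_ZSet_of_tgt_zero hΨ (htgt _) (htgt _)]
  exact TopologicalSpace.isOpen_generateFrom_of_mem ⟨_, _, (htgt _).trans (htgt _).symm, rfl⟩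

lemma isOpen_preimage_coords (hΨ : Function.LeftInverse Ψ pathOf) {U : Set (ℤ × ℕ∞ × ℕ∞)}
    (hU : U ∈ tailGenerators) : IsOpen[G1Top (sphS 1) (sphT 1)] (coords Ψ ⁻¹' U) := by
  rcases hU with ⟨k, a, b, rfl⟩ | ⟨k, m, hkm, rfl⟩
  · exact isOpen_preimage_coords_singleton hΨ k a b
  · let := G1Top (sphS 1) (sphT 1)
    rw [Zkm_eq_insert, Set.insert_eq, Set.preimage_union]
    exact (isOpen_preimage_coords_singleton hΨ _ _ _).union
      (isOpen_preimage_coords_Zkm_succ hΨ k m hkm)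

lemma isOpen_preimage_ZSet (hΨ : Function.LeftInverse Ψ pathOf)
    {α β : FinPath (sphS 1) (sphT 1)} (h : α.tgt = β.tgt) :
    IsOpen[TopologicalSpace.generateFrom (Set.preimage (coords Ψ) '' tailGenerators)]
      (Subtype.val ⁻¹' ZSet (sphS 1) (sphT 1) α β : Set (G1 (sphS 1) (sphT 1))) := by
  rcases Fin.exists_fin_two.mp ⟨α.tgt, rfl⟩ with hα | hα
  · rw [preimage_ZSet_of_tgt_zero hΨ hα (h ▸ hα)]
    exact TopologicalSpace.isOpen_generateFrom_of_mem ⟨_, Or.inr ⟨_, _, by omega, rfl⟩, rfl⟩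
  · have hz : sphS 1 ((pathOf 0).1 0) = 1 := by rw [sphS_pathOf_apply_zero, if_pos rfl]
    obtain ⟨a, ha⟩ := catSeq_pathOf_zero α (hz.trans hα.symm)
    obtain ⟨b, hb⟩ := catSeq_pathOf_zero β (hz.trans (h ▸ hα).symm)
    rw [preimage_ZSet_of_tgt_one hΨ hα (h ▸ hα) ha hb]
    exact TopologicalSpace.isOpen_generateFrom_of_mem ⟨_, Or.inl ⟨_, a, b, rfl⟩, rfl⟩

end QuantumSphere3

/-- For the graph of `S³_q` (the sphere graph with `n = 1`; vertex `1` is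
`(0 : Fin 2)`, vertex `2` is `(1 : Fin 2)`, `ℓᵢ = Sum.inl (i-1)`, `r₁ = Sum.inr 0`), let
`Ψ : E^∞ → ℕ̄` be the map with `Ψ(ℓ₂^∞) = 0`, `Ψ(ℓ₁^m r₁ ℓ₂^∞) = m+1`, `Ψ(ℓ₁^∞) = +∞`.
Then the bijection `𝒢¹ → ℤ × R_tail`, `(x,k,y) ↦ (k, Ψ(x), Ψ(y))`, transports the graph
groupoid topology to the topology generated by the singletons `{(k,a,b)}`, `a, b ∈ ℕ`, and
the sets `Z_{k,m}` with `k ∈ ℤ`, `m ∈ ℕ`, `m + k ≥ 0`. -/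
theorem stmt_11
    (Ψ : ↥(PathSp (sphS 1) (sphT 1)) → ℕ∞)
    (hΨ2 : ∀ x : ↥(PathSp (sphS 1) (sphT 1)),
      (∀ j : ℕ, x.1 j = Sum.inl 1) → Ψ x = 0)
    (hΨm : ∀ (m : ℕ) (x : ↥(PathSp (sphS 1) (sphT 1))),
      (∀ j : ℕ, x.1 j =
        if j < m then (Sum.inl 0 : SphE 1) else if j = m then Sum.inr 0 else Sum.inl 1) →
      Ψ x = (m : ℕ∞) + 1)
    (hΨ1 : ∀ x : ↥(PathSp (sphS 1) (sphT 1)),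
      (∀ j : ℕ, x.1 j = Sum.inl 0) → Ψ x = ⊤) :
    Function.Injective
      (fun g : G1 (sphS 1) (sphT 1) => ((g.1.2.1, Ψ g.1.1, Ψ g.1.2.2) : ℤ × ℕ∞ × ℕ∞)) ∧
    Set.range
      (fun g : G1 (sphS 1) (sphT 1) => ((g.1.2.1, Ψ g.1.1, Ψ g.1.2.2) : ℤ × ℕ∞ × ℕ∞))
      = {p : ℤ × ℕ∞ × ℕ∞ | (p.2.1, p.2.2) ∈ RT} ∧
    G1Top (sphS 1) (sphT 1) = TopologicalSpace.induced
      (fun g : G1 (sphS 1) (sphT 1) => ((g.1.2.1, Ψ g.1.1, Ψ g.1.2.2) : ℤ × ℕ∞ × ℕ∞))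
      (TopologicalSpace.generateFrom
        ({U : Set (ℤ × ℕ∞ × ℕ∞) | ∃ (k : ℤ) (a b : ℕ), U = {(k, (a : ℕ∞), (b : ℕ∞))}} ∪
         {U : Set (ℤ × ℕ∞ × ℕ∞) | ∃ (k : ℤ) (m : ℕ), 0 ≤ (m : ℤ) + k ∧ U = Zkm k m})) := by
  open QuantumSphere3 in
  have hΨ := leftInverse_pathOf hΨ2 hΨm hΨ1
  refine ⟨coords_injective hΨ, range_coords hΨ, ?_⟩
  change G1Top _ _ = .induced (coords Ψ) (.generateFrom tailGenerators)
  rw [induced_generateFrom_eq]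
  apply le_antisymm
  · exact le_generateFrom fun _ ⟨_, hU, hpre⟩ => hpre ▸ isOpen_preimage_coords hΨ hU
  · exact le_generateFrom fun _ ⟨_, _, htgt, hZ⟩ => hZ ▸ isOpen_preimage_ZSet hΨ htgt
end

section
/- Let n ≥ 1 and let 𝔉̃_n¹ := {(k_0,k,m) ∈ ℤ × ℤⁿ × ℕ̄ⁿ : k + m ∈ ℕ̄ⁿ, and if i_1 := ε(m) ≤ n then k_0 + Σ_{i=1}^{i_1} k_i = 0 and k_j = 0 for all i_1 < j ≤ n}. Then 𝔉̃_n¹ is closed under the transformation-groupoid operations: (a) if (k_0,k,m) ∈ 𝔉̃_n¹ and (k_0',k',k+m) ∈ 𝔉̃_n¹, then (k_0+k_0', k+k', m) ∈ 𝔉̃_n¹; (b) if (k_0,k,m) ∈ 𝔉̃_n¹ then (−k_0, −k, k+m) ∈ 𝔉̃_n¹; (c) (0,0,m) ∈ 𝔉̃_n¹ for every m ∈ ℕ̄ⁿ. -/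
/-- Membership in Sheu's groupoid `𝔉̃ₙ¹ ⊆ ℤ × ℤⁿ × ℕ̄ⁿ`: `k + m ∈ ℕ̄ⁿ` and, whenever the
(paper, `1`-based) anchor `ε(m) = anchor n m + 1` is `≤ n` (i.e. `anchor n m < n`),
`k₀ + ∑_{i=1}^{ε(m)} kᵢ = 0` and `k_j = 0` for all `ε(m) < j ≤ n`. -/
def sphCond (n : ℕ) (k0 : ℤ) (k : Fin n → ℤ) (m : Fin n → ℕ∞) : Prop :=
  okAdd k m ∧ (anchor n m < n →
    (k0 + ∑ i : Fin n, (if (i : ℕ) ≤ anchor n m then k i else 0) = 0) ∧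
    ∀ j : Fin n, anchor n m < (j : ℕ) → k j = 0)

lemma addZE_top_iff (k : ℤ) (m : ℕ∞) : addZE k m = ⊤ ↔ m = ⊤ := by
  unfold addZE
  split <;> simp_all

lemma anchor_addZv {n : ℕ} (k : Fin n → ℤ) (m : Fin n → ℕ∞) :
    anchor n (addZv k m) = anchor n m := by
  unfold anchor
  congr 1
  ext i
  simp only [Set.mem_setOf_eq, addZv, addZE_top_iff]

lemma toNat_addZv {n : ℕ} (k : Fin n → ℤ) (m : Fin n → ℕ∞) (i : Fin n)
    (h : m i ≠ ⊤) (h2 : 0 ≤ ((m i).toNat : ℤ) + k i) :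
    (((addZv k m i).toNat : ℤ)) = ((m i).toNat : ℤ) + k i := by
  unfold addZv addZE
  rw [if_neg h, ENat.toNat_coe, Int.toNat_of_nonneg h2]

/-- For `n ≥ 1`, the set `𝔉̃ₙ¹` is closed under the transformation-groupoid
operations: composition `(k₀',k',k+m)·(k₀,k,m) = (k₀+k₀', k+k', m)`, inverse
`(k₀,k,m)⁻¹ = (-k₀, -k, k+m)`, and it contains all units `(0,0,m)`. -/
theorem stmt_14 (n : ℕ) (hn : 1 ≤ n) :
    (∀ (k0 k0' : ℤ) (k k' : Fin n → ℤ) (m : Fin n → ℕ∞),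
      sphCond n k0 k m → sphCond n k0' k' (addZv k m) →
      sphCond n (k0 + k0') (fun i => k i + k' i) m) ∧
    (∀ (k0 : ℤ) (k : Fin n → ℤ) (m : Fin n → ℕ∞),
      sphCond n k0 k m → sphCond n (-k0) (fun i => -(k i)) (addZv k m)) ∧
    (∀ m : Fin n → ℕ∞, sphCond n 0 (fun _ => 0) m) := by
  refine ⟨?_, ?_, ?_⟩
  · rintro k0 k0' k k' m ⟨hok, hc⟩ ⟨hok', hc'⟩
    rw [anchor_addZv] at hc'
    constructor
    · intro i
      by_cases hne : m i = ⊤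
      · exact Or.inl hne
      · have h : 0 ≤ ((m i).toNat : ℤ) + k i := (hok i).resolve_left hne
        have h' : 0 ≤ (((addZv k m i).toNat : ℤ)) + k' i := by
          rcases hok' i with ht | ht
          · rw [addZv, addZE_top_iff] at ht; exact absurd ht hne
          · exact ht
        right
        rw [toNat_addZv k m i hne h] at h'
        show 0 ≤ ((m i).toNat : ℤ) + (k i + k' i)
        linarith
    · intro ha
      obtain ⟨hs, hz⟩ := hc ha
      obtain ⟨hs', hz'⟩ := hc' ha
      constructor
      · have : ∑ i : Fin n, (if (i : ℕ) ≤ anchor n m then k i + k' i else 0)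
            = (∑ i : Fin n, (if (i : ℕ) ≤ anchor n m then k i else 0))
            + (∑ i : Fin n, (if (i : ℕ) ≤ anchor n m then k' i else 0)) := by
          rw [← Finset.sum_add_distrib]
          apply Finset.sum_congr rfl
          intro i _
          split <;> ring
        rw [this]; linarith
      · intro j hj
        show k j + k' j = 0
        rw [hz j hj, hz' j hj, add_zero]
  · rintro k0 k m ⟨hok, hc⟩
    unfold sphCond
    rw [anchor_addZv]
    constructor
    · intro i
      rcases hok i with h | h
      · left; rwa [addZv, addZE_top_iff]
      · by_cases hne : m i = ⊤
        · left; rwa [addZv, addZE_top_iff]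
        · right
          rw [toNat_addZv k m i hne h]
          have h0 : (0:ℤ) ≤ ((m i).toNat : ℤ) := Int.natCast_nonneg _
          show 0 ≤ ((m i).toNat : ℤ) + k i + -(k i)
          linarith
    · intro ha
      obtain ⟨hs, hz⟩ := hc ha
      constructor
      · have : ∑ i : Fin n, (if (i : ℕ) ≤ anchor n m then -(k i) else 0)
            = -(∑ i : Fin n, (if (i : ℕ) ≤ anchor n m then k i else 0)) := by
          rw [← Finset.sum_neg_distrib]
          apply Finset.sum_congr rfl
          intro i _
          split <;> ring
        rw [this]; linarith
      · intro j hj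
        show -(k j) = 0
        rw [hz j hj]; ring
  · intro m
    refine ⟨fun i => Or.inr (by simp), fun _ => ⟨by simp, fun _ _ => rfl⟩⟩
end
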